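/- Let C be a strict monoidal category and D_{U,V}: U⊗V → U⊗V a natural isomorphism satisfying D_{I,X} = D_{X,I} = id_X and the fused relation (D_{X,Y}⊗id_Z⊗id_T)(id_X⊗D_{Y⊗Z,T})(D_{X⊗Y,Z}⊗id_T) = (id_X⊗id_Y⊗D_{Z,T})(D_{X,Y⊗Z}⊗id_T)(id_X⊗D_{Y,Z⊗T}). Then D is a twine, i.e. (C, D) is an entwined category. -/

import Mathlib

open CategoryTheory MonoidalCategory

universe v u

/-- A monoidal category is strict when the associators and unitors are `eqToHom`s of
equalities of objects. -/
structure MonStrict (C : Type u) [Category.{v} C] [MonoidalCategory C] : Prop where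
  assocObj : ∀ X Y Z : C, (X ⊗ Y) ⊗ Z = X ⊗ (Y ⊗ Z)
  lidObj : ∀ X : C, 𝟙_ C ⊗ X = X
  ridObj : ∀ X : C, X ⊗ 𝟙_ C = X
  assocHom : ∀ X Y Z : C, (α_ X Y Z).hom = eqToHom (assocObj X Y Z)
  lidHom : ∀ X : C, (λ_ X).hom = eqToHom (lidObj X)
  ridHom : ∀ X : C, (ρ_ X).hom = eqToHom (ridObj X)

variable {C : Type u} [Category.{v} C] [MonoidalCategory C]

/-- Transport of an endomorphism along an equality of objects of a strict monoidal
category. -/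
def cE {X Y : C} (h : X = Y) (f : Y ⟶ Y) : X ⟶ X := eqToHom h ≫ f ≫ eqToHom h.symm

/-- A pure-braided structure on a strict monoidal category: two families of natural
isomorphisms `A, B : U ⊗ V ⊗ W ≅ U ⊗ V ⊗ W` satisfying the pure-braided axioms. -/
structure PureBraided (C : Type u) [Category.{v} C] [MonoidalCategory C]
    (hS : MonStrict C) where
  A : ∀ U V W : C, U ⊗ (V ⊗ W) ≅ U ⊗ (V ⊗ W)
  B : ∀ U V W : C, U ⊗ (V ⊗ W) ≅ U ⊗ (V ⊗ W)
  natA : ∀ {U V W U' V' W' : C} (f : U ⟶ U') (g : V ⟶ V') (h : W ⟶ W'),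
    (f ⊗ₘ (g ⊗ₘ h)) ≫ (A U' V' W').hom = (A U V W).hom ≫ (f ⊗ₘ (g ⊗ₘ h))
  natB : ∀ {U V W U' V' W' : C} (f : U ⟶ U') (g : V ⟶ V') (h : W ⟶ W'),
    (f ⊗ₘ (g ⊗ₘ h)) ≫ (B U' V' W').hom = (B U V W).hom ≫ (f ⊗ₘ (g ⊗ₘ h))
  /-- `A_{U⊗V,W,X} = A_{U,V⊗W,X}(id_U ⊗ A_{V,W,X})` -/
  a1 : ∀ U V W X : C, (A (U ⊗ V) W X).hom =
    cE (by simp [hS.assocObj]) ((𝟙 U ⊗ₘ (A V W X).hom) ≫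
      cE (by simp [hS.assocObj]) (A U (V ⊗ W) X).hom)
  /-- `A_{U,V,W⊗X} = (A_{U,V,W} ⊗ id_X) A_{U,V⊗W,X}` -/
  a2 : ∀ U V W X : C, (A U V (W ⊗ X)).hom =
    cE (by simp [hS.assocObj]) ((cE (by simp [hS.assocObj]) (A U (V ⊗ W) X).hom) ≫
      ((A U V W).hom ⊗ₘ 𝟙 X))
  /-- `B_{U⊗V,W,X} = (id_U ⊗ B_{V,W,X}) B_{U,V⊗W,X}` -/
  baba : ∀ U V W X : C, (B (U ⊗ V) W X).hom =
    cE (by simp [hS.assocObj]) ((cE (by simp [hS.assocObj]) (B U (V ⊗ W) X).hom) ≫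
      (𝟙 U ⊗ₘ (B V W X).hom))
  /-- `B_{U,V,W⊗X} = B_{U,V⊗W,X}(B_{U,V,W} ⊗ id_X)` -/
  b2 : ∀ U V W X : C, (B U V (W ⊗ X)).hom =
    cE (by simp [hS.assocObj]) (((B U V W).hom ⊗ₘ 𝟙 X) ≫
      cE (by simp [hS.assocObj]) (B U (V ⊗ W) X).hom)
  /-- `(A_{U,V,W} ⊗ id_X)(id_U ⊗ B_{V,W,X}) = (id_U ⊗ B_{V,W,X})(A_{U,V,W} ⊗ id_X)` -/
  cab : ∀ U V W X : C,
    cE (by simp [hS.assocObj]) (𝟙 U ⊗ₘ (B V W X).hom) ≫ ((A U V W).hom ⊗ₘ 𝟙 X)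
    = ((A U V W).hom ⊗ₘ 𝟙 X) ≫ cE (by simp [hS.assocObj]) (𝟙 U ⊗ₘ (B V W X).hom)
  /-- `A_{U,I,V} = B_{U,I,V}` -/
  t1t : ∀ U V : C, A U (𝟙_ C) V = B U (𝟙_ C) V

/-- A twine on a strict monoidal category. -/
structure Twine (C : Type u) [Category.{v} C] [MonoidalCategory C]
    (hS : MonStrict C) where
  D : ∀ X Y : C, X ⊗ Y ≅ X ⊗ Y
  nat : ∀ {X Y X' Y' : C} (f : X ⟶ X') (g : Y ⟶ Y'),
    (f ⊗ₘ g) ≫ (D X' Y').hom = (D X Y).hom ≫ (f ⊗ₘ g)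
  unit : (D (𝟙_ C) (𝟙_ C)).hom = 𝟙 (𝟙_ C ⊗ 𝟙_ C)
  /-- `(D_{X,Y} ⊗ id_Z) D_{X⊗Y,Z} = (id_X ⊗ D_{Y,Z}) D_{X,Y⊗Z}` -/
  fus : ∀ X Y Z : C, (D (X ⊗ Y) Z).hom ≫ ((D X Y).hom ⊗ₘ 𝟙 Z)
    = cE (by simp [hS.assocObj]) ((D X (Y ⊗ Z)).hom ≫ (𝟙 X ⊗ₘ (D Y Z).hom))
  /-- the entwining axiom -/
  ent : ∀ X Y Z T : C,
    cE (by simp [hS.assocObj]) (𝟙 X ⊗ₘ (D Y (Z ⊗ T)).hom) ≫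
      cE (by simp [hS.assocObj]) (𝟙 X ⊗ₘ ((D Y Z).inv ⊗ₘ 𝟙 T)) ≫
        ((D (X ⊗ Y) Z).hom ⊗ₘ 𝟙 T)
    = ((D (X ⊗ Y) Z).hom ⊗ₘ 𝟙 T) ≫
        cE (by simp [hS.assocObj]) (𝟙 X ⊗ₘ ((D Y Z).inv ⊗ₘ 𝟙 T)) ≫
          cE (by simp [hS.assocObj]) (𝟙 X ⊗ₘ (D Y (Z ⊗ T)).hom)

/-- A strong twine on a strict monoidal category. -/
structure StrongTwine (C : Type u) [Category.{v} C] [MonoidalCategory C]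
    (hS : MonStrict C) where
  D : ∀ X Y : C, X ⊗ Y ≅ X ⊗ Y
  nat : ∀ {X Y X' Y' : C} (f : X ⟶ X') (g : Y ⟶ Y'),
    (f ⊗ₘ g) ≫ (D X' Y').hom = (D X Y).hom ≫ (f ⊗ₘ g)
  unit : (D (𝟙_ C) (𝟙_ C)).hom = 𝟙 (𝟙_ C ⊗ 𝟙_ C)
  /-- `(T_{U,V} ⊗ id_W) T_{U⊗V,W} = (id_U ⊗ T_{V,W}) T_{U,V⊗W}` -/
  fus : ∀ X Y Z : C, (D (X ⊗ Y) Z).hom ≫ ((D X Y).hom ⊗ₘ 𝟙 Z)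
    = cE (by simp [hS.assocObj]) ((D X (Y ⊗ Z)).hom ≫ (𝟙 X ⊗ₘ (D Y Z).hom))
  /-- `(T_{U,V} ⊗ id_W)(id_U ⊗ T_{V,W}) = (id_U ⊗ T_{V,W})(T_{U,V} ⊗ id_W)` -/
  comm : ∀ X Y Z : C,
    cE (by simp [hS.assocObj]) (𝟙 X ⊗ₘ (D Y Z).hom) ≫ ((D X Y).hom ⊗ₘ 𝟙 Z)
    = ((D X Y).hom ⊗ₘ 𝟙 Z) ≫ cE (by simp [hS.assocObj]) (𝟙 X ⊗ₘ (D Y Z).hom)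

/-- A D-structure (consisting of isomorphisms) on a strict monoidal category. -/
structure DStructure (C : Type u) [Category.{v} C] [MonoidalCategory C]
    (hS : MonStrict C) where
  R : ∀ X : C, X ≅ X
  nat : ∀ {X Y : C} (f : X ⟶ Y), f ≫ (R Y).hom = (R X).hom ≫ f
  unit : (R (𝟙_ C)).hom = 𝟙 (𝟙_ C)
  /-- `(R_{X⊗Y} ⊗ id_Z)(id_X ⊗ R_{Y⊗Z}) = (id_X ⊗ R_{Y⊗Z})(R_{X⊗Y} ⊗ id_Z)` -/
  comm : ∀ X Y Z : C,
    cE (by simp [hS.assocObj]) (𝟙 X ⊗ₘ (R (Y ⊗ Z)).hom) ≫ ((R (X ⊗ Y)).hom ⊗ₘ 𝟙 Z)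
    = ((R (X ⊗ Y)).hom ⊗ₘ 𝟙 Z) ≫ cE (by simp [hS.assocObj]) (𝟙 X ⊗ₘ (R (Y ⊗ Z)).hom)

/-!
Work in the automorphism group of `((X ⊗ Y) ⊗ Z) ⊗ T` and write, composing left to right,
`a = D_{XY,Z} ⊗ T`, `b = X ⊗ D_{Y,ZT}`, `c = XY ⊗ D_{Z,T}`, `d = X ⊗ D_{Y,Z} ⊗ T`,
`e = D_{X,Y} ⊗ Z ⊗ T`, `a' = D_{X,YZ} ⊗ T` and `b' = X ⊗ D_{YZ,T}`; the fused relation reads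
`a b' e = b a' c`. Setting `T = I` in it gives the fusion axiom of a twine, two instances of which
say `a e = a' d` and `b' d = b c`, while naturality of `D` makes `c` commute with `e` and `d` with
`a'` and `b'`. Solving for `a` and `b` and substituting, the entwining axiom `b d⁻¹ a = a d⁻¹ b`
becomes a consequence of the fused relation in a group.
-/

lemma mul_inv_mul_comm_of_fused {G : Type*} [Group G] {a b c d e a' b' : G}
    (hfused : e * b' * a = c * a' * b) (ha : e * a = d * a') (hb : d * b' = c * b)
    (hce : Commute c e) (had : Commute a' d) (hbd : Commute b' d) :
    a * d⁻¹ * b = b * d⁻¹ * a := by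
  obtain rfl : a = e⁻¹ * d * a' := by rw [mul_assoc, ← ha, inv_mul_cancel_left]
  obtain rfl : b = c⁻¹ * d * b' := by rw [mul_assoc, hb, inv_mul_cancel_left]
  calc e⁻¹ * d * a' * d⁻¹ * (c⁻¹ * d * b')
      = e⁻¹ * (a' * d) * d⁻¹ * (c⁻¹ * d * b') := by rw [had.eq]; group
    _ = c⁻¹ * (c * e⁻¹) * a' * (c⁻¹ * d * b') := by group
    _ = c⁻¹ * (e⁻¹ * c) * a' * (c⁻¹ * d * b') := by rw [hce.inv_right.eq]
    _ = c⁻¹ * e⁻¹ * (c * a' * (c⁻¹ * d * b')) := by group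
    _ = c⁻¹ * e⁻¹ * (e * b' * (e⁻¹ * d * a')) := by rw [hfused]
    _ = c⁻¹ * (b' * d) * d⁻¹ * (e⁻¹ * d * a') := by group
    _ = c⁻¹ * d * b' * d⁻¹ * (e⁻¹ * d * a') := by rw [hbd.eq]; group

section Transport

variable {𝒞 : Type*} [Category 𝒞] {X Y Z : 𝒞}

lemma cE_id (h : X = Y) : cE h (𝟙 Y) = 𝟙 X := by simp [cE]

lemma cE_comp (h : X = Y) (f g : Y ⟶ Y) : cE h f ≫ cE h g = cE h (f ≫ g) := by
  simp [cE]

lemma cE_cE (h : X = Y) (h' : Y = Z) (f : Z ⟶ Z) : cE h (cE h' f) = cE (h.trans h') f := by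
  subst h h'; simp [cE]

lemma cE_inj (h : X = Y) {f g : Y ⟶ Y} : cE h f = cE h g ↔ f = g := by
  subst h; simp [cE]

lemma cE_commute (h : X = Y) {f g : Y ⟶ Y} (hfg : f ≫ g = g ≫ f) :
    cE h f ≫ cE h g = cE h g ≫ cE h f := by
  rw [cE_comp, cE_comp, hfg]

def cEIso (h : X = Y) (α : Y ≅ Y) : X ≅ X where
  hom := cE h α.hom
  inv := cE h α.inv
  hom_inv_id := by rw [cE_comp, α.hom_inv_id, cE_id]
  inv_hom_id := by rw [cE_comp, α.inv_hom_id, cE_id]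

-- Multiplication in `Aut B` is composition in the reverse order: `f * g = g ≪≫ f`.
lemma comp_inv_comp_comm_of_fused {B : 𝒞} (a b c d e a' b' : B ≅ B)
    (hfused : a.hom ≫ b'.hom ≫ e.hom = b.hom ≫ a'.hom ≫ c.hom)
    (ha : a.hom ≫ e.hom = a'.hom ≫ d.hom) (hb : b'.hom ≫ d.hom = b.hom ≫ c.hom)
    (hce : c.hom ≫ e.hom = e.hom ≫ c.hom) (had : a'.hom ≫ d.hom = d.hom ≫ a'.hom)
    (hbd : b'.hom ≫ d.hom = d.hom ≫ b'.hom) :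
    b.hom ≫ d.inv ≫ a.hom = a.hom ≫ d.inv ≫ b.hom :=
  congrArg Iso.hom <| mul_inv_mul_comm_of_fused (G := Aut B) (Iso.ext hfused) (Iso.ext ha)
    (Iso.ext hb) (Iso.ext hce.symm) (Iso.ext had.symm) (Iso.ext hbd.symm)

end Transport

lemma id_tensorHom_cE (W : C) {X Y : C} (h : X = Y) (f : Y ⟶ Y) :
    𝟙 W ⊗ₘ cE h f = cE (congrArg (W ⊗ ·) h) (𝟙 W ⊗ₘ f) := by
  subst h; simp [cE]

lemma cE_tensorHom_id (W : C) {X Y : C} (h : X = Y) (f : Y ⟶ Y) :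
    cE h f ⊗ₘ 𝟙 W = cE (congrArg (· ⊗ W) h) (f ⊗ₘ 𝟙 W) := by
  subst h; simp [cE]

lemma eq_cE_of_eq (F : ∀ U V : C, U ⊗ V ⟶ U ⊗ V) {U U' V V' : C} (hU : U = U') (hV : V = V') :
    F U V = cE (by rw [hU, hV]) (F U' V') := by
  subst hU hV; simp [cE]

lemma MonStrict.tensorHom_assoc (hS : MonStrict C) {X Y Z : C} (f : X ⟶ X) (g : Y ⟶ Y)
    (k : Z ⟶ Z) : (f ⊗ₘ g) ⊗ₘ k = cE (hS.assocObj X Y Z) (f ⊗ₘ (g ⊗ₘ k)) := by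
  have h := associator_naturality f g k
  rw [hS.assocHom, comp_eqToHom_iff] at h
  simpa [cE] using h

lemma MonStrict.tensorHom_id_unit (hS : MonStrict C) {X : C} (f : X ⟶ X) :
    f ⊗ₘ 𝟙 (𝟙_ C) = cE (hS.ridObj X) f := by
  have h := rightUnitor_naturality f
  rw [hS.ridHom, comp_eqToHom_iff] at h
  simpa [cE] using h

def IsFused (hS : MonStrict C) (D : ∀ U V : C, U ⊗ V ≅ U ⊗ V) : Prop :=
  ∀ X Y Z T : C,
    ((D (X ⊗ Y) Z).hom ⊗ₘ 𝟙 T) ≫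
      cE (by simp [hS.assocObj]) (𝟙 X ⊗ₘ (D (Y ⊗ Z) T).hom) ≫
        (((D X Y).hom ⊗ₘ 𝟙 Z) ⊗ₘ 𝟙 T)
    = cE (by simp [hS.assocObj]) (𝟙 X ⊗ₘ (D Y (Z ⊗ T)).hom) ≫
        cE (by simp [hS.assocObj]) ((D X (Y ⊗ Z)).hom ⊗ₘ 𝟙 T) ≫
          cE (by simp [hS.assocObj]) (𝟙 (X ⊗ Y) ⊗ₘ (D Z T).hom)

namespace IsFused

variable {hS : MonStrict C} {D : ∀ U V : C, U ⊗ V ≅ U ⊗ V}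

lemma fus (hD : IsFused hS D)
    (nat : ∀ {X Y X' Y' : C} (f : X ⟶ X') (g : Y ⟶ Y'),
      (f ⊗ₘ g) ≫ (D X' Y').hom = (D X Y).hom ≫ (f ⊗ₘ g))
    (hIR : ∀ X : C, (D X (𝟙_ C)).hom = 𝟙 (X ⊗ 𝟙_ C)) (X Y Z : C) :
    (D (X ⊗ Y) Z).hom ≫ ((D X Y).hom ⊗ₘ 𝟙 Z)
      = cE (by simp [hS.assocObj]) ((D X (Y ⊗ Z)).hom ≫ (𝟙 X ⊗ₘ (D Y Z).hom)) := by
  have h := hD X Y Z (𝟙_ C)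
  rw [eq_cE_of_eq (fun U V => (D U V).hom) rfl (hS.ridObj Z)] at h
  simp only [hIR, id_tensorHom_id, cE_id, Category.id_comp, Category.comp_id,
    hS.tensorHom_id_unit, id_tensorHom_cE, cE_cE, cE_comp] at h
  rw [← nat (𝟙 X) (D Y Z).hom]
  exact (cE_inj _).1 (h.trans (cE_cE _ (by simp [hS.assocObj]) _).symm)

lemma ent (hD : IsFused hS D)
    (nat : ∀ {X Y X' Y' : C} (f : X ⟶ X') (g : Y ⟶ Y'),
      (f ⊗ₘ g) ≫ (D X' Y').hom = (D X Y).hom ≫ (f ⊗ₘ g))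
    (hIR : ∀ X : C, (D X (𝟙_ C)).hom = 𝟙 (X ⊗ 𝟙_ C)) (X Y Z T : C) :
    cE (by simp [hS.assocObj]) (𝟙 X ⊗ₘ (D Y (Z ⊗ T)).hom) ≫
      cE (by simp [hS.assocObj]) (𝟙 X ⊗ₘ ((D Y Z).inv ⊗ₘ 𝟙 T)) ≫
        ((D (X ⊗ Y) Z).hom ⊗ₘ 𝟙 T)
    = ((D (X ⊗ Y) Z).hom ⊗ₘ 𝟙 T) ≫
        cE (by simp [hS.assocObj]) (𝟙 X ⊗ₘ ((D Y Z).inv ⊗ₘ 𝟙 T)) ≫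
          cE (by simp [hS.assocObj]) (𝟙 X ⊗ₘ (D Y (Z ⊗ T)).hom) := by
  have p1 : ((X ⊗ Y) ⊗ Z) ⊗ T = X ⊗ (Y ⊗ (Z ⊗ T)) := by simp [hS.assocObj]
  have p2 : ((X ⊗ Y) ⊗ Z) ⊗ T = (X ⊗ Y) ⊗ (Z ⊗ T) := by simp [hS.assocObj]
  have p3 : ((X ⊗ Y) ⊗ Z) ⊗ T = X ⊗ ((Y ⊗ Z) ⊗ T) := by simp [hS.assocObj]
  have p4 : ((X ⊗ Y) ⊗ Z) ⊗ T = (X ⊗ (Y ⊗ Z)) ⊗ T := by simp [hS.assocObj]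
  have fus := hD.fus nat hIR
  have hc : cE p2 (𝟙 (X ⊗ Y) ⊗ₘ (D Z T).hom) = cE p1 (𝟙 X ⊗ₘ (𝟙 Y ⊗ₘ (D Z T).hom)) := by
    rw [← id_tensorHom_id, hS.tensorHom_assoc, cE_cE]
  have hd : cE p3 (𝟙 X ⊗ₘ ((D Y Z).hom ⊗ₘ 𝟙 T)) = cE p4 ((𝟙 X ⊗ₘ (D Y Z).hom) ⊗ₘ 𝟙 T) := by
    rw [hS.tensorHom_assoc, cE_cE]
  have he : ((D X Y).hom ⊗ₘ 𝟙 Z) ⊗ₘ 𝟙 T = cE p2 ((D X Y).hom ⊗ₘ 𝟙 (Z ⊗ T)) := by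
    rw [hS.tensorHom_assoc, id_tensorHom_id]
  refine comp_inv_comp_comm_of_fused
    (tensorIso (D (X ⊗ Y) Z) (Iso.refl T))
    (cEIso p1 (tensorIso (Iso.refl X) (D Y (Z ⊗ T))))
    (cEIso p2 (tensorIso (Iso.refl (X ⊗ Y)) (D Z T)))
    (cEIso p3 (tensorIso (Iso.refl X) (tensorIso (D Y Z) (Iso.refl T))))
    (tensorIso (tensorIso (D X Y) (Iso.refl Z)) (Iso.refl T))
    (cEIso p4 (tensorIso (D X (Y ⊗ Z)) (Iso.refl T)))
    (cEIso p3 (tensorIso (Iso.refl X) (D (Y ⊗ Z) T))) (hD X Y Z T) ?_ ?_ ?_ ?_ ?_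
  all_goals simp only [cEIso, MonoidalCategory.tensorIso_hom, Iso.refl_hom]
  · rw [← comp_tensor_id, fus, cE_tensorHom_id, comp_tensor_id, ← cE_comp, hd]
  · rw [cE_comp, ← id_tensor_comp, fus, id_tensorHom_cE, cE_cE, id_tensor_comp, ← cE_comp, hc]
  · rw [he]
    exact cE_commute p2 (by rw [id_tensor_comp_tensor_id, tensor_id_comp_id_tensor])
  · rw [hd]
    exact cE_commute p4 (by rw [← comp_tensor_id, ← comp_tensor_id, nat])
  · exact cE_commute p3 (by rw [← id_tensor_comp, ← id_tensor_comp, nat])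

def toTwine (hD : IsFused hS D)
    (nat : ∀ {X Y X' Y' : C} (f : X ⟶ X') (g : Y ⟶ Y'),
      (f ⊗ₘ g) ≫ (D X' Y').hom = (D X Y).hom ≫ (f ⊗ₘ g))
    (hIR : ∀ X : C, (D X (𝟙_ C)).hom = 𝟙 (X ⊗ 𝟙_ C)) :
    Twine C hS where
  D := D
  nat := nat
  unit := hIR _
  fus := hD.fus nat hIR
  ent := hD.ent nat hIR

end IsFused

/-- A natural isomorphism `D` with `D_{I,X} = D_{X,I} = id_X` satisfying the fused relation
is a twine, i.e. makes the category entwined. -/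
theorem stmt11 (hS : MonStrict C) (Dm : ∀ U V : C, U ⊗ V ≅ U ⊗ V)
    (nat : ∀ {X Y X' Y' : C} (f : X ⟶ X') (g : Y ⟶ Y'),
      (f ⊗ₘ g) ≫ (Dm X' Y').hom = (Dm X Y).hom ≫ (f ⊗ₘ g))
    (hIR : ∀ X : C, (Dm X (𝟙_ C)).hom = 𝟙 (X ⊗ 𝟙_ C))
    (hfused : ∀ X Y Z T : C,
      ((Dm (X ⊗ Y) Z).hom ⊗ₘ 𝟙 T) ≫
        cE (by simp [hS.assocObj]) (𝟙 X ⊗ₘ (Dm (Y ⊗ Z) T).hom) ≫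
          (((Dm X Y).hom ⊗ₘ 𝟙 Z) ⊗ₘ 𝟙 T)
      = cE (by simp [hS.assocObj]) (𝟙 X ⊗ₘ (Dm Y (Z ⊗ T)).hom) ≫
          cE (by simp [hS.assocObj]) ((Dm X (Y ⊗ Z)).hom ⊗ₘ 𝟙 T) ≫
            cE (by simp [hS.assocObj]) (𝟙 (X ⊗ Y) ⊗ₘ (Dm Z T).hom)) :
    ∃ T : Twine C hS, T.D = Dm :=
  ⟨IsFused.toTwine (D := Dm) hfused nat hIR, rfl⟩
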